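/- arXiv:0710.4981 — 6 statements merged into one kernel-verified Lean document; each statement's English description precedes it below -/
import Mathlib

section
/- Let p be a fixed odd prime and let q ∈ ℚ_p satisfy ‖q − 1‖_p < 1. For every continuous function f : ℤ_p → ℚ_p, the sequence N ↦ (1/[p^N]_{−q}) · Σ_{x=0}^{p^N − 1} f(x)(−q)^x converges in ℚ_p as N → ∞; that is, the fermionic p-adic q-integral I_{−q}(f) exists. -/
/-!
Let `S_N = ∑_{x < p^N} f(x) (-q)^x`. Writing `x < p^(N+1)` as `p^N j + y` with `j < p`, and using
`∑_{j < p} (-1)^j = 1` for odd `p`, the difference `S_{N+1} - S_N` is a double sum of terms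
`f(p^N j + y) (-q)^(p^N j + y) - f(y) (-q)^y (-1)^j`. These are uniformly small: `f` is uniformly
continuous and `‖p^N j‖ ≤ p^(-N)`, while `(-q)^(p^N) → -1` because `p^(N+1) ∣ q^(p^N) - 1`.
Hence `S_{N+1} - S_N → 0`, which makes `S_N` Cauchy in the ultrametric space `ℚ_p`, and the
normalising factor `(1 + q) / (1 + q^(p^N))` tends to `(1 + q) / 2`.
-/

open Filter Finset Topology

theorem Finset.sum_range_mul_eq_sum_sum {M : Type*} [AddCommMonoid M] (g : ℕ → M) (a b : ℕ) :
    ∑ x ∈ range (a * b), g x = ∑ j ∈ range b, ∑ y ∈ range a, g (a * j + y) := by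
  induction b with
  | zero => simp
  | succ b ih => rw [Nat.mul_succ, sum_range_add, ih, sum_range_succ]

theorem IsUltrametricDist.norm_pow_sub_pow_le {R : Type*} [NormedRing R] [NormOneClass R]
    [IsUltrametricDist R] {a b : R} (ha : ‖a‖ ≤ 1) (hb : ‖b‖ ≤ 1) (n : ℕ) :
    ‖a ^ n - b ^ n‖ ≤ ‖a - b‖ := by
  induction n with
  | zero => simp
  | succ n ih =>
    rw [show a ^ (n + 1) - b ^ (n + 1) = a ^ n * (a - b) + (a ^ n - b ^ n) * b by noncomm_ring]
    refine (norm_add_le_max _ _).trans (max_le ?_ ?_)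
    · have han : ‖a ^ n‖ ≤ 1 := (_root_.norm_pow_le a n).trans (pow_le_one₀ (norm_nonneg a) ha)
      exact (norm_mul_le _ _).trans (mul_le_of_le_one_left (norm_nonneg _) han)
    · exact (norm_mul_le _ _).trans ((mul_le_of_le_one_right (norm_nonneg _) hb).trans ih)

theorem IsUltrametricDist.norm_le_one_of_norm_sub_one_le_one {R : Type*} [SeminormedRing R]
    [NormOneClass R] [IsUltrametricDist R] {x : R} (hx : ‖x - 1‖ ≤ 1) : ‖x‖ ≤ 1 := by
  simpa using (norm_add_one_le_max_norm_one (x - 1)).trans (max_le hx le_rfl)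

namespace Padic

variable {p : ℕ} [Fact p.Prime]

theorem tendsto_pow_prime_pow_nhds_one {q : ℚ_[p]} (hq : ‖q - 1‖ < 1) :
    Tendsto (fun N ↦ q ^ p ^ N) atTop (𝓝 1) := by
  let z : ℤ_[p] := ⟨q, IsUltrametricDist.norm_le_one_of_norm_sub_one_le_one hq.le⟩
  have hz : (p : ℤ_[p]) ∣ z - 1 :=
    (PadicInt.norm_lt_one_iff_dvd _).1 (by simpa [PadicInt.norm_def])
  have hbound (N : ℕ) : ‖q ^ p ^ N - 1‖ ≤ ‖(p : ℚ_[p]) ^ (N + 1)‖ := by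
    obtain ⟨c, hc⟩ := dvd_sub_pow_of_dvd_sub hz N
    rw [one_pow] at hc
    have hc' : q ^ p ^ N - 1 = (p : ℚ_[p]) ^ (N + 1) * c := by
      exact_mod_cast congrArg ((↑) : ℤ_[p] → ℚ_[p]) hc
    rw [hc', norm_mul]
    exact mul_le_of_le_one_right (norm_nonneg _) (PadicInt.norm_le_one c)
  rw [tendsto_iff_norm_sub_tendsto_zero]
  refine squeeze_zero (fun _ ↦ norm_nonneg _) hbound ?_
  exact ((tendsto_pow_atTop_nhds_zero_of_norm_lt_one norm_p_lt_one).comp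
    (tendsto_add_atTop_nat 1)).norm.trans (by simp)

end Padic

section FermionicIntegral

variable {p : ℕ} [Fact p.Prime]

noncomputable def fermionicRiemannSum (f : ℤ_[p] → ℚ_[p]) (q : ℚ_[p]) (N : ℕ) : ℚ_[p] :=
  ∑ x ∈ range (p ^ N), f x * (-q) ^ x

theorem fermionicRiemannSum_succ_sub (hp : Odd p) (f : ℤ_[p] → ℚ_[p]) (q : ℚ_[p]) (N : ℕ) :
    fermionicRiemannSum f q (N + 1) - fermionicRiemannSum f q N =
      ∑ j ∈ range p, ∑ y ∈ range (p ^ N),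
        (f ↑(p ^ N * j + y) * (-q) ^ (p ^ N * j + y) - f y * (-q) ^ y * (-1) ^ j) := by
  have hN : fermionicRiemannSum f q N =
      ∑ j ∈ range p, ∑ y ∈ range (p ^ N), f y * (-q) ^ y * (-1) ^ j := by
    rw [fermionicRiemannSum, sum_comm]
    simp only [← mul_sum, neg_one_geom_sum, if_neg (Nat.not_even_iff_odd.mpr hp), mul_one]
  simp only [sum_sub_distrib]
  rw [hN, fermionicRiemannSum, pow_succ, sum_range_mul_eq_sum_sum]

theorem norm_fermionicRiemannSum_succ_sub_le (hp : Odd p) {f : ℤ_[p] → ℚ_[p]} {q : ℚ_[p]}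
    (hq : ‖q‖ ≤ 1) {N : ℕ} {ε : ℝ} (hε : 0 ≤ ε)
    (hf : ∀ x y : ℤ_[p], ‖x - y‖ ≤ ‖(p : ℤ_[p]) ^ N‖ → ‖f x - f y‖ ≤ ε)
    (hfq : ∀ x, ‖f x‖ * ‖q ^ p ^ N - 1‖ ≤ ε) :
    ‖fermionicRiemannSum f q (N + 1) - fermionicRiemannSum f q N‖ ≤ ε := by
  rw [fermionicRiemannSum_succ_sub hp]
  refine IsUltrametricDist.norm_sum_le_of_forall_le_of_nonneg hε fun j _ ↦ ?_
  refine IsUltrametricDist.norm_sum_le_of_forall_le_of_nonneg hε fun y _ ↦ ?_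
  set v := (-q) ^ p ^ N
  have hv : ‖v‖ ≤ 1 := by simpa [v] using pow_le_one₀ (norm_nonneg q) hq
  have hv1 : ‖v ^ j - (-1) ^ j‖ ≤ ‖q ^ p ^ N - 1‖ := by
    refine (IsUltrametricDist.norm_pow_sub_pow_le hv (by simp) j).trans_eq ?_
    rw [show v = -q ^ p ^ N from hp.pow.neg_pow q,
      show -q ^ p ^ N - -1 = -(q ^ p ^ N - 1) by ring, norm_neg]
  rw [show f ↑(p ^ N * j + y) * (-q) ^ (p ^ N * j + y) - f y * (-q) ^ y * (-1) ^ j =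
      (-q) ^ y * ((f ↑(p ^ N * j + y) - f y) * v ^ j + f y * (v ^ j - (-1) ^ j)) by ring,
    norm_mul, norm_pow, norm_neg]
  refine mul_le_of_le_one_left (norm_nonneg _) (pow_le_one₀ (norm_nonneg q) hq) |>.trans ?_
  refine (IsUltrametricDist.norm_add_le_max _ _).trans (max_le ?_ ?_)
  · rw [norm_mul, norm_pow]
    refine mul_le_of_le_one_right (norm_nonneg _) (pow_le_one₀ (norm_nonneg v) hv) |>.trans ?_
    refine hf _ _ ?_
    rw [show ((p ^ N * j + y : ℕ) : ℤ_[p]) - y = (p : ℤ_[p]) ^ N * j by push_cast; ring, norm_mul]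
    exact mul_le_of_le_one_right (norm_nonneg _) (PadicInt.norm_le_one _)
  · rw [norm_mul]
    exact (mul_le_mul_of_nonneg_left hv1 (norm_nonneg _)).trans (hfq y)

theorem tendsto_fermionicRiemannSum_succ_sub (hp : Odd p) {q : ℚ_[p]} (hq : ‖q - 1‖ < 1)
    (f : C(ℤ_[p], ℚ_[p])) :
    Tendsto (fun N ↦ fermionicRiemannSum f q (N + 1) - fermionicRiemannSum f q N) atTop (𝓝 0) := by
  rw [NormedAddGroup.tendsto_nhds_zero]
  intro ε hε
  obtain ⟨δ, hδ, hfδ⟩ := Metric.uniformContinuous_iff.1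
    (CompactSpace.uniformContinuous_of_continuous f.continuous) (ε / 2) (half_pos hε)
  have hpN : ∀ᶠ N in atTop, ‖(p : ℤ_[p]) ^ N‖ < δ :=
    (tendsto_pow_atTop_nhds_zero_of_norm_lt_one
      ((PadicInt.norm_lt_one_iff_dvd _).2 dvd_rfl)).norm.eventually_lt_const (by simpa using hδ)
  have hqN : ∀ᶠ N in atTop, ‖f‖ * ‖q ^ p ^ N - 1‖ < ε / 2 := by
    have hlim := ((Padic.tendsto_pow_prime_pow_nhds_one hq).sub_const 1).norm.const_mul ‖f‖
    simp only [sub_self, norm_zero, mul_zero] at hlim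
    exact hlim.eventually_lt_const (half_pos hε)
  filter_upwards [hpN, hqN] with N hN1 hN2
  have hq1 := IsUltrametricDist.norm_le_one_of_norm_sub_one_le_one hq.le
  refine (norm_fermionicRiemannSum_succ_sub_le hp hq1 (half_pos hε).le
    (fun x y hxy ↦ ?_) (fun x ↦ ?_)).trans_lt (half_lt_self hε)
  · rw [← dist_eq_norm]
    exact (hfδ (by rw [dist_eq_norm]; exact hxy.trans_lt hN1)).le
  · exact (mul_le_mul_of_nonneg_right (f.norm_coe_le_norm x) (norm_nonneg _)).trans hN2.le

end FermionicIntegral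

theorem stmt_1 (p : ℕ) [Fact p.Prime] (hp : Odd p)
    (q : ℚ_[p]) (hq : ‖q - 1‖ < 1)
    (f : C(ℤ_[p], ℚ_[p])) :
    ∃ L : ℚ_[p],
      Tendsto
        (fun N : ℕ =>
          (1 / ((1 + q ^ p ^ N) / (1 + q))) *
            ∑ x ∈ Finset.range (p ^ N), f (x : ℤ_[p]) * (-q) ^ x)
        atTop (nhds L) := by
  obtain ⟨S, hS⟩ := cauchySeq_tendsto_of_complete <|
    NonarchimedeanAddGroup.cauchySeq_of_tendsto_sub_nhds_zero
      (tendsto_fermionicRiemannSum_succ_sub hp hq f)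
  have hcoef : Tendsto (fun N ↦ (1 + q) / (1 + q ^ p ^ N)) atTop (𝓝 ((1 + q) / 2)) := by
    refine tendsto_const_nhds.div ?_ two_ne_zero
    rw [← one_add_one_eq_two]
    exact tendsto_const_nhds.add (Padic.tendsto_pow_prime_pow_nhds_one hq)
  refine ⟨(1 + q) / 2 * S, ?_⟩
  simpa only [one_div_div, fermionicRiemannSum] using hcoef.mul hS
end

section
/- Let p be a fixed odd prime, let q ∈ ℚ_p satisfy ‖q − 1‖_p < 1, let d be an odd positive integer with gcd(d, p) = 1, and let a and N be nonnegative integers. Then μ_{−q} is a distribution on ℤ_p in the sense that (−q)^a/[d p^N]_{−q} = Σ_{i=0}^{p−1} (−q)^{a + i d p^N}/[d p^{N+1}]_{−q}, where all denominators are nonzero. -/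
/-!
In an ultrametric field, `‖q - 1‖ < 1` propagates to `‖q ^ k - 1‖ < 1` for every `k`, while
`‖-2‖ = 1` because `p` is odd; hence `1 + q ^ k` never vanishes. The identity is then the
geometric sum with ratio `(-q) ^ (d * p ^ N) = -q ^ (d * p ^ N)`, which uses that `d * p ^ N`
and `p` are odd.
-/

open Finset

theorem IsUltrametricDist.norm_pow_sub_one_lt_one {R : Type*} [NormedRing R]
    [IsUltrametricDist R] {x : R} (hx : ‖x - 1‖ < 1) (k : ℕ) :
    ‖x ^ k - 1‖ < 1 := by
  induction k with
  | zero => simp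
  | succ k ih =>
    have hsplit : x ^ (k + 1) - 1 = ((x ^ k - 1) * (x - 1) + (x ^ k - 1)) + (x - 1) := by
      noncomm_ring
    have hprod : ‖(x ^ k - 1) * (x - 1)‖ < 1 :=
      (norm_mul_le _ _).trans_lt (mul_lt_one_of_nonneg_of_lt_one_left (norm_nonneg _) ih hx.le)
    rw [hsplit]
    exact (IsUltrametricDist.norm_add_le_max _ _).trans_lt <| max_lt
      ((IsUltrametricDist.norm_add_le_max _ _).trans_lt (max_lt hprod ih)) hx

theorem one_add_ne_zero_of_norm_sub_one_lt_one {R : Type*} [NormedRing R] {x : R}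
    (h2 : ‖(2 : R)‖ = 1) (hx : ‖x - 1‖ < 1) : 1 + x ≠ 0 := by
  intro h
  rw [show x - 1 = (1 + x) - 2 by rw [← one_add_one_eq_two]; abel, h, zero_sub, norm_neg,
    h2] at hx
  exact hx.false

theorem Padic.norm_two_eq_one {p : ℕ} [Fact p.Prime] (hp : Odd p) : ‖(2 : ℚ_[p])‖ = 1 :=
  mod_cast Padic.norm_natCast_eq_one_iff.mpr (Nat.coprime_two_right.mpr hp)

theorem sum_range_neg_pow_mul_one_add_pow {R : Type*} [CommRing R] (q : R) (a : ℕ)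
    {m n : ℕ} (hm : Odd m) (hn : Odd n) :
    (∑ i ∈ range n, (-q) ^ (a + i * m)) * (1 + q ^ m) = (-q) ^ a * (1 + q ^ (m * n)) := by
  have hgeom := geom_sum_mul_neg (-q ^ m) n
  simp only [sub_neg_eq_add, hn.neg_pow, ← pow_mul] at hgeom
  simp only [pow_add, mul_comm _ m, pow_mul, hm.neg_pow, ← mul_sum, mul_assoc, hgeom]

theorem stmt_3_general (p : ℕ) [Fact p.Prime] (hp : Odd p)
    (q : ℚ_[p]) (hq : ‖q - 1‖ < 1)
    (d : ℕ) (hdodd : Odd d)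
    (a N : ℕ) :
    (1 + q ^ (d * p ^ N)) / (1 + q) ≠ 0 ∧
    (1 + q ^ (d * p ^ (N + 1))) / (1 + q) ≠ 0 ∧
    (-q) ^ a / ((1 + q ^ (d * p ^ N)) / (1 + q)) =
      ∑ i ∈ Finset.range p,
        (-q) ^ (a + i * (d * p ^ N)) / ((1 + q ^ (d * p ^ (N + 1))) / (1 + q)) := by
  have hne : ∀ k : ℕ, 1 + q ^ k ≠ 0 := fun k =>
    one_add_ne_zero_of_norm_sub_one_lt_one (Padic.norm_two_eq_one hp)
      (IsUltrametricDist.norm_pow_sub_one_lt_one hq k)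
  have h1q : 1 + q ≠ 0 := by simpa using hne 1
  refine ⟨div_ne_zero (hne _) h1q, div_ne_zero (hne _) h1q, ?_⟩
  have hsum := sum_range_neg_pow_mul_one_add_pow q a (hdodd.mul (hp.pow (n := N))) hp
  rw [mul_assoc, ← pow_succ] at hsum
  rw [← sum_div, div_div_eq_mul_div, div_div_eq_mul_div, div_eq_div_iff (hne _) (hne _)]
  linear_combination (1 + q) * hsum.symm

theorem stmt_3 (p : ℕ) [Fact p.Prime] (hp : Odd p)
    (q : ℚ_[p]) (hq : ‖q - 1‖ < 1)
    (d : ℕ) (hd : 0 < d) (hdodd : Odd d) (hdp : Nat.gcd d p = 1)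
    (a N : ℕ) :
    (1 + q ^ (d * p ^ N)) / (1 + q) ≠ 0 ∧
    (1 + q ^ (d * p ^ (N + 1))) / (1 + q) ≠ 0 ∧
    (-q) ^ a / ((1 + q ^ (d * p ^ N)) / (1 + q)) =
      ∑ i ∈ Finset.range p,
        (-q) ^ (a + i * (d * p ^ N)) / ((1 + q ^ (d * p ^ (N + 1))) / (1 + q)) :=
  stmt_3_general p hp q hq d hdodd a N
end

section
/- Let p be a fixed odd prime and let q ∈ ℚ_p satisfy ‖q − 1‖_p < 1 and q ≠ 1. For every nonnegative integer m and every natural number x, the q-Euler polynomial E_{m,q}(x), defined as the fermionic p-adic q-integral of y ↦ [x + y]_q^m, admits the closed form: lim_{N→∞} (1/[p^N]_{−q}) Σ_{y=0}^{p^N − 1} [x + y]_q^m (−q)^y = [2]_q · (1/(1 − q))^m · Σ_{i=0}^{m} C(m, i) (−1)^i q^{i x}/(1 + q^{i+1}), where all denominators 1 + q^{i+1} are nonzero. -/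
open Filter Finset

/-!
Expanding `[x + y]_q^m = (1 - q^(x+y))^m / (1 - q)^m` binomially turns the fermionic sum over
`y < p^N` into alternating geometric sums in `q^(i+1)`; as `p^N` is odd, these equal
`(1 + q^((i+1) p^N)) / (1 + q^(i+1))`. Since `‖q - 1‖ < 1` and `‖p‖ < 1`, the ultrametric estimate
`‖a^p - 1‖ ≤ max ‖a - 1‖ ‖p‖ * ‖a - 1‖` gives `q^(p^N) → 1`, so every `1 + q^(...)` occurring
tends to `2`, which is a unit because `p` is odd.
-/

section Ultrametric

variable {R : Type*} [NormedRing R] [IsUltrametricDist R]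

lemma norm_pow_sub_one_le {a : R} (ha : ‖a‖ ≤ 1) (k : ℕ) : ‖a ^ k - 1‖ ≤ ‖a - 1‖ := by
  induction k with
  | zero => simp
  | succ k ih =>
    have hsplit : a ^ (k + 1) - 1 = a * (a ^ k - 1) + (a - 1) := by rw [pow_succ']; noncomm_ring
    rw [hsplit]
    refine (IsUltrametricDist.norm_add_le_max _ _).trans (max_le ?_ le_rfl)
    calc ‖a * (a ^ k - 1)‖ ≤ ‖a‖ * ‖a ^ k - 1‖ := norm_mul_le _ _
      _ ≤ 1 * ‖a - 1‖ := by gcongr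
      _ = ‖a - 1‖ := one_mul _

lemma norm_pow_sub_one_le_max_mul (n : ℕ) {a : R} (ha : ‖a‖ ≤ 1) :
    ‖a ^ n - 1‖ ≤ max ‖a - 1‖ ‖(n : R)‖ * ‖a - 1‖ := by
  have hsum : ∑ j ∈ range n, a ^ j = ∑ j ∈ range n, (a ^ j - 1) + n := by
    simp [sum_sub_distrib]
  rw [← geom_sum_mul, hsum]
  refine (norm_mul_le _ _).trans (mul_le_mul_of_nonneg_right ?_ (norm_nonneg _))
  refine (IsUltrametricDist.norm_add_le_max _ _).trans (max_le_max ?_ le_rfl)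
  exact IsUltrametricDist.norm_sum_le_of_forall_le_of_nonneg (norm_nonneg _)
    fun j _ => norm_pow_sub_one_le ha j

variable [NormOneClass R]

lemma norm_le_one_of_norm_sub_one_lt {a : R} (ha : ‖a - 1‖ < 1) : ‖a‖ ≤ 1 :=
  calc ‖a‖ = ‖(a - 1) + 1‖ := by rw [sub_add_cancel]
    _ ≤ max ‖a - 1‖ ‖(1 : R)‖ := IsUltrametricDist.norm_add_le_max _ _
    _ ≤ 1 := max_le ha.le norm_one.le

lemma pow_ne_neg_one_of_norm_two_eq_one (h2 : ‖(2 : R)‖ = 1) {a : R} (ha : ‖a - 1‖ < 1)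
    (k : ℕ) : a ^ k ≠ -1 := by
  intro hk
  have hlt := (norm_pow_sub_one_le (norm_le_one_of_norm_sub_one_lt ha) k).trans_lt ha
  rw [hk, show (-1 - 1 : R) = -2 by norm_num, norm_neg, h2] at hlt
  exact lt_irrefl _ hlt

lemma norm_pow_pow_sub_one_le (n : ℕ) {a : R} (ha : ‖a‖ ≤ 1) (N : ℕ) :
    ‖a ^ n ^ N - 1‖ ≤ max ‖a - 1‖ ‖(n : R)‖ ^ N * ‖a - 1‖ := by
  induction N with
  | zero => simp
  | succ N ih =>
    have hb : ‖a ^ n ^ N‖ ≤ 1 := (norm_pow_le _ _).trans (pow_le_one₀ (norm_nonneg _) ha)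
    have hr : max ‖a ^ n ^ N - 1‖ ‖(n : R)‖ ≤ max ‖a - 1‖ ‖(n : R)‖ :=
      max_le_max (norm_pow_sub_one_le ha _) le_rfl
    calc ‖a ^ n ^ (N + 1) - 1‖ = ‖(a ^ n ^ N) ^ n - 1‖ := by rw [pow_succ, pow_mul]
      _ ≤ max ‖a ^ n ^ N - 1‖ ‖(n : R)‖ * ‖a ^ n ^ N - 1‖ := norm_pow_sub_one_le_max_mul n hb
      _ ≤ max ‖a - 1‖ ‖(n : R)‖ * (max ‖a - 1‖ ‖(n : R)‖ ^ N * ‖a - 1‖) :=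
        mul_le_mul hr ih (norm_nonneg _) ((norm_nonneg _).trans (le_max_left _ _))
      _ = max ‖a - 1‖ ‖(n : R)‖ ^ (N + 1) * ‖a - 1‖ := by ring

lemma tendsto_pow_pow_atTop_nhds_one {n : ℕ} (hn : ‖(n : R)‖ < 1) {a : R} (ha : ‖a - 1‖ < 1) :
    Tendsto (fun N => a ^ n ^ N) atTop (nhds 1) := by
  rw [tendsto_iff_norm_sub_tendsto_zero]
  refine squeeze_zero (fun _ => norm_nonneg _)
    (norm_pow_pow_sub_one_le n (norm_le_one_of_norm_sub_one_lt ha)) ?_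
  simpa using (tendsto_pow_atTop_nhds_zero_of_lt_one (by positivity) (max_lt ha hn)).mul_const
    ‖a - 1‖

end Ultrametric

section Field

variable {K : Type*} [Field K]

lemma geom_sum_neg_of_odd {c : K} (hc : 1 + c ≠ 0) {n : ℕ} (hn : Odd n) :
    ∑ y ∈ range n, (-c) ^ y = (1 + c ^ n) / (1 + c) := by
  have hc' : -c ≠ 1 := fun h => hc (by linear_combination -h)
  rw [geom_sum_eq hc', hn.neg_pow, ← neg_div_neg_eq]
  congr 1 <;> ring

lemma div_pow_eq_sum_choose (b d : K) (m : ℕ) :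
    ((1 - b) / d) ^ m = (1 / d) ^ m * ∑ i ∈ range (m + 1), (m.choose i : K) * (-1) ^ i * b ^ i := by
  rw [div_eq_mul_one_div, mul_pow, mul_comm, sub_eq_neg_add, add_pow]
  congr 1
  refine sum_congr rfl fun i _ => ?_
  rw [one_pow, mul_one, neg_pow]
  ring

theorem sum_qint_pow_mul_neg_pow {q : K} {m : ℕ} (hq : ∀ i ≤ m, 1 + q ^ (i + 1) ≠ 0) (x : ℕ)
    {n : ℕ} (hn : Odd n) :
    ∑ y ∈ range n, ((1 - q ^ (x + y)) / (1 - q)) ^ m * (-q) ^ y =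
      (1 / (1 - q)) ^ m * ∑ i ∈ range (m + 1),
        (m.choose i : K) * (-1) ^ i * q ^ (i * x) * ((1 + (q ^ n) ^ (i + 1)) / (1 + q ^ (i + 1))) :=
  calc _ = ∑ y ∈ range n, (1 / (1 - q)) ^ m * ∑ i ∈ range (m + 1),
          (m.choose i : K) * (-1) ^ i * q ^ (i * x) * (-q ^ (i + 1)) ^ y := by
        refine sum_congr rfl fun y _ => ?_
        rw [div_pow_eq_sum_choose, mul_assoc, sum_mul]
        congr 1
        exact sum_congr rfl fun i _ => by ring
    _ = (1 / (1 - q)) ^ m * ∑ i ∈ range (m + 1),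
          (m.choose i : K) * (-1) ^ i * q ^ (i * x) * ∑ y ∈ range n, (-q ^ (i + 1)) ^ y := by
        rw [← mul_sum, sum_comm]
        simp_rw [mul_sum]
    _ = _ := by
        congr 1
        refine sum_congr rfl fun i hi => ?_
        rw [geom_sum_neg_of_odd (hq i (Nat.lt_succ_iff.mp (mem_range.mp hi))) hn, pow_right_comm]

end Field

theorem stmt_5_general (p : ℕ) [Fact p.Prime] (hp : Odd p)
    (q : ℚ_[p]) (hq : ‖q - 1‖ < 1)
    (m : ℕ) (x : ℕ) :
    (∀ i ≤ m, (1 : ℚ_[p]) + q ^ (i + 1) ≠ 0) ∧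
    Tendsto
      (fun N : ℕ =>
        (1 / ((1 + q ^ p ^ N) / (1 + q))) *
          ∑ y ∈ Finset.range (p ^ N),
            ((1 - q ^ (x + y)) / (1 - q)) ^ m * (-q) ^ y)
      atTop
      (nhds ((1 + q) * (1 / (1 - q)) ^ m *
        ∑ i ∈ Finset.range (m + 1),
          (m.choose i : ℚ_[p]) * (-1) ^ i * q ^ (i * x) / (1 + q ^ (i + 1)))) := by
  have h2 : ‖(2 : ℚ_[p])‖ = 1 := by
    exact_mod_cast Padic.norm_natCast_eq_one_iff.mpr (Nat.coprime_two_right.mpr hp)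
  have hne : ∀ k : ℕ, (1 : ℚ_[p]) + q ^ k ≠ 0 := fun k h =>
    pow_ne_neg_one_of_norm_two_eq_one h2 hq k (eq_neg_of_add_eq_zero_right h)
  refine ⟨fun i _ => hne (i + 1), ?_⟩
  set F : ℚ_[p] → ℚ_[p] := fun t => (1 + q) / (1 + t) * ((1 / (1 - q)) ^ m *
    ∑ i ∈ range (m + 1),
      (m.choose i : ℚ_[p]) * (-1) ^ i * q ^ (i * x) * ((1 + t ^ (i + 1)) / (1 + q ^ (i + 1))))
  have hF : ContinuousAt F 1 := by fun_prop (disch := norm_num)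
  have hF1 : F 1 = (1 + q) * (1 / (1 - q)) ^ m * ∑ i ∈ range (m + 1),
      (m.choose i : ℚ_[p]) * (-1) ^ i * q ^ (i * x) / (1 + q ^ (i + 1)) := by
    simp only [F, one_pow, mul_sum]
    refine sum_congr rfl fun i _ => ?_
    field_simp
  rw [← hF1]
  refine (hF.tendsto.comp (tendsto_pow_pow_atTop_nhds_one Padic.norm_p_lt_one hq)).congr fun N => ?_
  simp only [F, Function.comp_apply, one_div_div,
    sum_qint_pow_mul_neg_pow (fun i _ => hne (i + 1)) x hp.pow]

theorem stmt_5 (p : ℕ) [Fact p.Prime] (hp : Odd p)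
    (q : ℚ_[p]) (hq : ‖q - 1‖ < 1) (hq1 : q ≠ 1)
    (m : ℕ) (x : ℕ) :
    (∀ i ≤ m, (1 : ℚ_[p]) + q ^ (i + 1) ≠ 0) ∧
    Tendsto
      (fun N : ℕ =>
        (1 / ((1 + q ^ p ^ N) / (1 + q))) *
          ∑ y ∈ Finset.range (p ^ N),
            ((1 - q ^ (x + y)) / (1 - q)) ^ m * (-q) ^ y)
      atTop
      (nhds ((1 + q) * (1 / (1 - q)) ^ m *
        ∑ i ∈ Finset.range (m + 1),
          (m.choose i : ℚ_[p]) * (-1) ^ i * q ^ (i * x) / (1 + q ^ (i + 1)))) :=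
  stmt_5_general p hp q hq m x
end

section
/- Let p be a fixed odd prime and let q ∈ ℚ_p satisfy ‖q − 1‖_p < 1 and q ≠ 1. Then the first q-Euler number E_{1,q}, i.e., the fermionic p-adic q-integral of y ↦ [y]_q, equals −q/(1 + q^2): lim_{N→∞} (1/[p^N]_{−q}) Σ_{y=0}^{p^N − 1} [y]_q (−q)^y = −q/[2]_{q^2}, where [2]_{q^2} = 1 + q^2 ≠ 0. -/
/-!
The identity `(1 - q ^ y) (-q) ^ y = (-q) ^ y - (-q ^ 2) ^ y` splits the sum into two geometric
sums; for odd `n` this makes the normalized sum an explicit rational function of `t = q ^ n`,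
continuous at `t = 1` (`p` odd gives `1 + q ≠ 0` and `1 + q ^ 2 ≠ 0`). For `n = p ^ N` and
`q ≡ 1 mod p` one has `q ^ p ^ N ≡ 1 mod p ^ (N + 1)`, so `t → 1` and the limit is the value at
`t = 1`, namely `-q / (1 + q ^ 2)`.
-/

open Filter Finset Topology

namespace Padic

variable {p : ℕ} [Fact p.Prime] {q : ℚ_[p]}

lemma exists_padicInt_eq_of_norm_sub_one_lt_one (hq : ‖q - 1‖ < 1) :
    ∃ z : ℤ_[p], (z : ℚ_[p]) = q ∧ (p : ℤ_[p]) ∣ z - 1 := by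
  let w : ℤ_[p] := ⟨q - 1, hq.le⟩
  refine ⟨w + 1, sub_add_cancel q 1, ?_⟩
  rw [add_sub_cancel_right, ← PadicInt.norm_lt_one_iff_dvd]
  exact hq

lemma norm_pow_sub_one_lt_one (hq : ‖q - 1‖ < 1) (n : ℕ) : ‖q ^ n - 1‖ < 1 := by
  obtain ⟨z, rfl, hz⟩ := exists_padicInt_eq_of_norm_sub_one_lt_one hq
  exact (PadicInt.norm_lt_one_iff_dvd (z ^ n - 1)).2 (hz.trans (sub_one_dvd_pow_sub_one z n))

lemma norm_pow_prime_pow_sub_one_le (hq : ‖q - 1‖ < 1) (N : ℕ) :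
    ‖q ^ p ^ N - 1‖ ≤ (p : ℝ)⁻¹ ^ (N + 1) := by
  obtain ⟨z, rfl, hz⟩ := exists_padicInt_eq_of_norm_sub_one_lt_one hq
  obtain ⟨c, hc⟩ : (p : ℤ_[p]) ^ (N + 1) ∣ z ^ p ^ N - 1 := by
    simpa using dvd_sub_pow_of_dvd_sub hz N
  change ‖z ^ p ^ N - 1‖ ≤ _
  rw [hc, norm_mul, norm_pow, PadicInt.norm_p]
  exact mul_le_of_le_one_right (by positivity) c.norm_le_one

lemma tendsto_pow_prime_pow (hq : ‖q - 1‖ < 1) :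
    Tendsto (fun N : ℕ => q ^ p ^ N) atTop (𝓝 1) := by
  have hp : (p : ℝ)⁻¹ < 1 := inv_lt_one_of_one_lt₀ (mod_cast (Fact.out : p.Prime).one_lt)
  refine tendsto_iff_norm_sub_tendsto_zero.2 <|
    squeeze_zero (fun _ => norm_nonneg _) (norm_pow_prime_pow_sub_one_le hq) ?_
  exact (tendsto_pow_atTop_nhds_zero_of_lt_one (by positivity) hp).comp (tendsto_add_atTop_nat 1)

lemma one_add_ne_zero (hp : Odd p) (hq : ‖q - 1‖ < 1) : 1 + q ≠ 0 := by
  intro h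
  have h2 : ‖((2 : ℕ) : ℚ_[p])‖ = 1 := norm_natCast_eq_one_iff.2 (hp.coprime_two_right)
  rw [show ((2 : ℕ) : ℚ_[p]) = -(q - 1) by linear_combination h, norm_neg] at h2
  exact hq.ne h2

end Padic

lemma sum_qNat_mul_neg_pow_of_odd {K : Type*} [Field K] {x : K} (h1 : 1 + x ≠ 0)
    (h2 : 1 + x ^ 2 ≠ 0) {n : ℕ} (hn : Odd n) :
    ∑ y ∈ range n, (1 - x ^ y) / (1 - x) * (-x) ^ y =
      ((1 + x ^ n) / (1 + x) - (1 + (x ^ n) ^ 2) / (1 + x ^ 2)) / (1 - x) := by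
  have hx : -x ≠ 1 := fun h => h1 (by linear_combination -h)
  have hx2 : -x ^ 2 ≠ 1 := fun h => h2 (by linear_combination -h)
  have hterm : ∀ y, (1 - x ^ y) / (1 - x) * (-x) ^ y = ((-x) ^ y - (-x ^ 2) ^ y) / (1 - x) := by
    intro y
    rw [div_mul_eq_mul_div, sub_mul, one_mul, ← mul_pow]
    ring
  rw [sum_congr rfl fun y _ => hterm y, ← sum_div, sum_sub_distrib, geom_sum_eq hx,
    geom_sum_eq hx2, hn.neg_pow, hn.neg_pow, ← pow_mul, mul_comm 2, pow_mul]
  congr 1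
  field_simp
  ring

theorem stmt_6 (p : ℕ) [Fact p.Prime] (hp : Odd p)
    (q : ℚ_[p]) (hq : ‖q - 1‖ < 1) (hq1 : q ≠ 1) :
    (1 : ℚ_[p]) + q ^ 2 ≠ 0 ∧
    Tendsto
      (fun N : ℕ =>
        (1 / ((1 + q ^ p ^ N) / (1 + q))) *
          ∑ y ∈ Finset.range (p ^ N), ((1 - q ^ y) / (1 - q)) * (-q) ^ y)
      atTop (nhds (-q / (1 + q ^ 2))) := by
  have h1 : 1 + q ≠ 0 := Padic.one_add_ne_zero hp hq
  have h2 : 1 + q ^ 2 ≠ 0 := Padic.one_add_ne_zero hp (Padic.norm_pow_sub_one_lt_one hq 2)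
  have hq1' : 1 - q ≠ 0 := sub_ne_zero.2 hq1.symm
  refine ⟨h2, ?_⟩
  have hlim : Tendsto (fun t : ℚ_[p] =>
      1 / ((1 + t) / (1 + q)) * (((1 + t) / (1 + q) - (1 + t ^ 2) / (1 + q ^ 2)) / (1 - q)))
      (𝓝 1) (𝓝 (-q / (1 + q ^ 2))) := by
    convert ContinuousAt.tendsto ?_ using 2
    · field_simp
      ring
    · fun_prop (disch := first | assumption | norm_num [h1])
  refine (hlim.comp (Padic.tendsto_pow_prime_pow hq)).congr fun N => ?_
  rw [Function.comp_apply, sum_qNat_mul_neg_pow_of_odd h1 h2 hp.pow]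
end

section
/- Let p be a prime and let x ∈ ℚ_p satisfy ‖x‖_p < 1. Then both series L(x) = Σ_{n=1}^{∞} ((−1)^{n+1}/n) x^{n} and S(x) = Σ_{n=1}^{∞} ((−1)^{n+1}/(n(n+1))) x^{n+1} converge in ℚ_p, and (1 + x)·L(x) = x + S(x). (Here L(x) is the p-adic logarithm of 1 + x.) -/
/-!
Since `1 / (n (n + 1)) = 1 / n - 1 / (n + 1)`, the `n`-th term of `S(x)` is the `(n + 1)`-st term
of `L(x)` plus `x` times its `n`-th term, so `S(x) = (L(x) - x) + x L(x)` as soon as `L(x)`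
converges. Convergence holds because `‖1 / n‖_p ≤ n`, so the terms of `L(x)` are dominated by
`n ‖x‖ⁿ`.
-/

namespace Padic

variable {p : ℕ} [Fact p.Prime]

theorem inv_norm_natCast_le {n : ℕ} (hn : n ≠ 0) : ‖(n : ℚ_[p])‖⁻¹ ≤ n := by
  rw [norm_eq_zpow_neg_valuation (Nat.cast_ne_zero.mpr hn), valuation_natCast, zpow_neg, inv_inv,
    zpow_natCast]
  exact_mod_cast Nat.le_of_dvd (Nat.pos_of_ne_zero hn) pow_padicValNat_dvd

theorem summable_log_series {x : ℚ_[p]} (hx : ‖x‖ < 1) :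
    Summable (fun n : ℕ => (-1 : ℚ_[p]) ^ (n + 1 + 1) * x ^ (n + 1) / (n + 1)) := by
  have hbound : Summable (fun n : ℕ => ((n + 1 : ℕ) : ℝ) * ‖x‖ ^ (n + 1)) := by
    have := (summable_nat_add_iff 1).mpr
      (summable_pow_mul_geometric_of_norm_lt_one (R := ℝ) 1 (r := ‖x‖) (by simpa using hx))
    simpa only [pow_one] using this
  refine Summable.of_norm_bounded hbound fun n => ?_
  rw [norm_div, norm_mul, norm_pow, norm_pow, norm_neg, norm_one, one_pow, one_mul, div_eq_inv_mul,
    ← Nat.cast_succ]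
  gcongr
  exact inv_norm_natCast_le n.succ_ne_zero

end Padic

theorem hasSum_one_add_mul_log_series_sub {K : Type*} [Field K] [CharZero K] [TopologicalSpace K]
    [IsTopologicalRing K] {x L : K}
    (hL : HasSum (fun n : ℕ => (-1 : K) ^ (n + 1 + 1) * x ^ (n + 1) / (n + 1)) L) :
    HasSum (fun n : ℕ => ((-1 : K) ^ (n + 1 + 1) / ((n + 1) * (n + 1 + 1))) * x ^ (n + 1 + 1))
      ((1 + x) * L - x) := by
  have htail := (hasSum_nat_add_iff' 1).mpr hL
  simp only [Finset.sum_range_one, zero_add, pow_one, Nat.cast_zero, div_one, Nat.reduceAdd,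
    neg_one_sq, one_mul] at htail
  have hterm : ∀ n : ℕ, ((-1 : K) ^ (n + 1 + 1) / ((n + 1) * (n + 1 + 1))) * x ^ (n + 1 + 1) =
      (-1 : K) ^ (n + 1 + 1 + 1) * x ^ (n + 1 + 1) / ((n + 1 : ℕ) + 1) +
        x * ((-1 : K) ^ (n + 1 + 1) * x ^ (n + 1) / (n + 1)) := fun n => by
    have h1 : (n : K) + 1 ≠ 0 := n.cast_add_one_ne_zero
    have h2 : (n : K) + 1 + 1 ≠ 0 := by exact_mod_cast (n + 1).succ_ne_zero
    push_cast
    field_simp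
    ring
  rw [funext hterm, show (1 + x) * L - x = L - x + x * L by ring]
  exact htail.add (hL.mul_left x)

theorem stmt_9 (p : ℕ) [Fact p.Prime] (x : ℚ_[p]) (hx : ‖x‖ < 1) :
    ∃ L S : ℚ_[p],
      HasSum (fun n : ℕ => (-1 : ℚ_[p]) ^ (n + 1 + 1) * x ^ (n + 1) / (n + 1)) L ∧
      HasSum
        (fun n : ℕ =>
          ((-1 : ℚ_[p]) ^ (n + 1 + 1) / ((n + 1) * (n + 1 + 1))) * x ^ (n + 1 + 1))
        S ∧
      (1 + x) * L = x + S := by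
  obtain ⟨L, hL⟩ := Padic.summable_log_series hx
  exact ⟨L, (1 + x) * L - x, hL, hasSum_one_add_mul_log_series_sub hL, by ring⟩
end

section
/- For every nonnegative integer n, the q-Euler numbers converge to the ordinary Euler numbers as q → 1: the function of a real variable q given by E_{n,q} = (1 + q)·(1/(1 − q))^n · Σ_{i=0}^{n} C(n, i)(−1)^i/(1 + q^{i+1}) (defined for real q near 1 with q ≠ 1, and by E_{0,q} = (1+q)·(1/(1+q)) = 1 for n = 0) tends, as q → 1 with q ≠ 1, to the n-th Euler number E_n, where E_n is the n-th derivative at t = 0 of the function t ↦ 2/(e^t + 1). -/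
/-!
Substitute `q = exp t`. Since `1 / (1 + q ^ (i + 1)) = F ((i + 1) t) / 2` for
`F t = 2 / (exp t + 1)`, the `q`-Euler number becomes
`(1 + q) / 2 · G t / t ^ n · (t / (1 - exp t)) ^ n` with
`G t = ∑ i, C(n, i) (-1) ^ i F ((i + 1) t)`. The `m`-th derivative of `G` at `0` is
`F⁽ᵐ⁾(0)` times the alternating sum `∑ i, C(n, i) (-1) ^ i (i + 1) ^ m`, an `n`-th forward
difference of `x ↦ x ^ m`: it vanishes for `m < n` and equals `(-1) ^ n n!` for `m = n`.
By Taylor's theorem `G t / t ^ n → (-1) ^ n F⁽ⁿ⁾(0)`, and `t / (1 - exp t) → -1` supplies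
the missing sign.
-/

open Filter Finset Topology Real
open scoped Nat

noncomputable def qEulerNumber (n : ℕ) (q : ℝ) : ℝ :=
  (1 + q) * (1 / (1 - q)) ^ n *
    ∑ i ∈ range (n + 1), (n.choose i : ℝ) * (-1) ^ i / (1 + q ^ (i + 1))

section FiniteDifference

variable {R : Type*} [CommRing R]

theorem sum_choose_mul_neg_one_pow_mul_add_one_pow (n m : ℕ) :
    ∑ i ∈ range (n + 1), (n.choose i : R) * (-1) ^ i * ((i : R) + 1) ^ m =
      (-1) ^ n * (fwdDiff 1)^[n] (fun r : R ↦ r ^ m) 1 := by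
  rw [fwdDiff_iter_eq_sum_shift, mul_sum]
  refine sum_congr rfl fun i hi ↦ ?_
  have hi : i ≤ n := Nat.lt_succ_iff.mp (mem_range.mp hi)
  have hsign : (-1 : R) ^ n * (-1) ^ (n - i) = (-1) ^ i := by
    rw [← pow_add, show n + (n - i) = i + 2 * (n - i) by omega, pow_add, pow_mul, neg_one_sq,
      one_pow, mul_one]
  simp only [zsmul_eq_mul, nsmul_eq_mul, Int.cast_mul, Int.cast_pow, Int.cast_neg, Int.cast_one,
    Int.cast_natCast, mul_one]
  rw [← hsign, add_comm (1 : R)]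
  ring

theorem sum_choose_mul_neg_one_pow_mul_add_one_pow_of_lt {n m : ℕ} (h : m < n) :
    ∑ i ∈ range (n + 1), (n.choose i : R) * (-1) ^ i * ((i : R) + 1) ^ m = 0 := by
  rw [sum_choose_mul_neg_one_pow_mul_add_one_pow, fwdDiff_iter_pow_eq_zero_of_lt h, Pi.zero_apply,
    mul_zero]

theorem sum_choose_mul_neg_one_pow_mul_add_one_pow_self (n : ℕ) :
    ∑ i ∈ range (n + 1), (n.choose i : R) * (-1) ^ i * ((i : R) + 1) ^ n = (-1) ^ n * n ! := by
  rw [sum_choose_mul_neg_one_pow_mul_add_one_pow, fwdDiff_iter_eq_factorial, Pi.natCast_apply]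

end FiniteDifference

theorem tendsto_div_pow_of_iteratedDeriv_eq_zero {f : ℝ → ℝ} {n : ℕ} (hf : ContDiff ℝ n f)
    (hzero : ∀ k < n, iteratedDeriv k f 0 = 0) :
    Tendsto (fun x ↦ f x / x ^ n) (𝓝[≠] 0) (𝓝 (iteratedDeriv n f 0 / n !)) := by
  have htaylor : ∀ x, taylorWithinEval f n Set.univ 0 x = iteratedDeriv n f 0 / n ! * x ^ n := by
    intro x
    rw [taylor_within_apply, sum_range_succ, sum_eq_zero fun k hk ↦ ?_]
    · simp only [iteratedDerivWithin_univ, sub_zero, smul_eq_mul, zero_add]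
      ring
    · simp [iteratedDerivWithin_univ, hzero k (mem_range.mp hk)]
  have hremainder := (Real.taylor_tendsto convex_univ (Set.mem_univ 0) hf.contDiffOn).mono_left
    (nhdsWithin_mono 0 (Set.subset_univ {0}ᶜ))
  simp only [htaylor, sub_zero] at hremainder
  rw [← zero_add (iteratedDeriv n f 0 / n !)]
  refine (hremainder.add_const _).congr' ?_
  filter_upwards [self_mem_nhdsWithin] with x hx
  have : x ^ n ≠ 0 := pow_ne_zero n hx
  field_simp
  ring

theorem iteratedDeriv_sum_choose_mul_comp_mul {F : ℝ → ℝ} {m : ℕ} (hF : ContDiff ℝ m F) (n : ℕ) :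
    iteratedDeriv m (fun t ↦ ∑ i ∈ range (n + 1), (n.choose i : ℝ) * (-1) ^ i * F ((i + 1) * t)) 0
      = (∑ i ∈ range (n + 1), (n.choose i : ℝ) * (-1) ^ i * ((i : ℝ) + 1) ^ m)
        * iteratedDeriv m F 0 := by
  have hdilate : ∀ i : ℕ, ContDiff ℝ m (fun t ↦ F ((i + 1) * t)) :=
    fun i ↦ hF.comp (contDiff_const.mul contDiff_id)
  rw [iteratedDeriv_fun_sum fun i _ ↦ (contDiff_const.mul (hdilate i)).contDiffAt, sum_mul]
  refine sum_congr rfl fun i _ ↦ ?_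
  rw [iteratedDeriv_const_mul_field, iteratedDeriv_comp_const_mul hF]
  dsimp only
  rw [mul_zero]
  ring

theorem tendsto_sum_choose_mul_comp_mul_div_pow {F : ℝ → ℝ} {n : ℕ} (hF : ContDiff ℝ n F) :
    Tendsto
      (fun t ↦ (∑ i ∈ range (n + 1), (n.choose i : ℝ) * (-1) ^ i * F ((i + 1) * t)) / t ^ n)
      (𝓝[≠] 0) (𝓝 ((-1) ^ n * iteratedDeriv n F 0)) := by
  have hG : ContDiff ℝ n
      (fun t ↦ ∑ i ∈ range (n + 1), (n.choose i : ℝ) * (-1) ^ i * F ((i + 1) * t)) :=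
    ContDiff.sum fun i _ ↦ contDiff_const.mul (hF.comp (contDiff_const.mul contDiff_id))
  have hzero : ∀ k < n, iteratedDeriv k
      (fun t ↦ ∑ i ∈ range (n + 1), (n.choose i : ℝ) * (-1) ^ i * F ((i + 1) * t)) 0 = 0 := by
    intro k hk
    rw [iteratedDeriv_sum_choose_mul_comp_mul (hF.of_le (by exact_mod_cast hk.le)),
      sum_choose_mul_neg_one_pow_mul_add_one_pow_of_lt hk, zero_mul]
  convert tendsto_div_pow_of_iteratedDeriv_eq_zero hG hzero using 2
  rw [iteratedDeriv_sum_choose_mul_comp_mul hF, sum_choose_mul_neg_one_pow_mul_add_one_pow_self]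
  field_simp

theorem tendsto_div_one_sub_exp : Tendsto (fun t ↦ t / (1 - exp t)) (𝓝[≠] 0) (𝓝 (-1)) := by
  have hslope := (hasDerivAt_exp 0).tendsto_slope_zero
  simp only [zero_add, exp_zero, smul_eq_mul] at hslope
  convert (hslope.inv₀ one_ne_zero).neg using 2 with t
  · rw [mul_inv, inv_inv, ← div_eq_mul_inv, ← div_neg, neg_sub]
  · norm_num

theorem qEulerNumber_exp (n : ℕ) {t : ℝ} (ht : t ≠ 0) :
    qEulerNumber n (exp t) = (1 + exp t) / 2 *
      ((∑ i ∈ range (n + 1), (n.choose i : ℝ) * (-1) ^ i * (2 / (exp ((i + 1) * t) + 1))) /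
        t ^ n) * (t / (1 - exp t)) ^ n := by
  have hpow : ∀ i : ℕ, exp ((i + 1) * t) = exp t ^ (i + 1) := fun i ↦ by
    rw [← exp_nat_mul]
    push_cast
    rfl
  have hsum : ∑ i ∈ range (n + 1), (n.choose i : ℝ) * (-1) ^ i * (2 / (exp t ^ (i + 1) + 1)) =
      2 * ∑ i ∈ range (n + 1), (n.choose i : ℝ) * (-1) ^ i / (1 + exp t ^ (i + 1)) := by
    rw [mul_sum]
    exact sum_congr rfl fun i _ ↦ by ring
  have hexp : 1 - exp t ≠ 0 := sub_ne_zero.mpr fun h ↦ ht ((exp_eq_one_iff t).mp h.symm)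
  have htn : t ^ n ≠ 0 := pow_ne_zero n ht
  simp only [qEulerNumber, hpow, hsum, div_pow, one_pow]
  field_simp

theorem tendsto_qEulerNumber_exp (n : ℕ) :
    Tendsto (fun t ↦ qEulerNumber n (exp t)) (𝓝[≠] 0)
      (𝓝 (iteratedDeriv n (fun t ↦ 2 / (exp t + 1)) 0)) := by
  have hF : ContDiff ℝ n (fun t ↦ 2 / (exp t + 1)) :=
    contDiff_const.div (contDiff_exp.add contDiff_const) fun t ↦ by positivity
  have hhalf : Tendsto (fun t ↦ (1 + exp t) / 2) (𝓝[≠] 0) (𝓝 1) :=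
    (((continuous_const.add continuous_exp).div_const 2).tendsto' 0 1 (by norm_num)).mono_left
      nhdsWithin_le_nhds
  have hlim := (hhalf.mul (tendsto_sum_choose_mul_comp_mul_div_pow hF)).mul
    (tendsto_div_one_sub_exp.pow n)
  rw [one_mul, mul_comm, ← mul_assoc, ← mul_pow, neg_one_mul, neg_neg, one_pow, one_mul] at hlim
  refine hlim.congr' ?_
  filter_upwards [self_mem_nhdsWithin] with t ht
  exact (qEulerNumber_exp n ht).symm

theorem stmt_10 (n : ℕ) :
    Tendsto
      (fun q : ℝ =>
        (1 + q) * (1 / (1 - q)) ^ n *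
          ∑ i ∈ Finset.range (n + 1),
            (n.choose i : ℝ) * (-1) ^ i / (1 + q ^ (i + 1)))
      (nhdsWithin 1 {1}ᶜ)
      (nhds (iteratedDeriv n (fun t : ℝ => 2 / (Real.exp t + 1)) 0)) := by
  have hlog : Tendsto log (𝓝[≠] 1) (𝓝[≠] 0) :=
    log_one ▸ (hasDerivAt_log one_ne_zero).tendsto_nhdsNE (inv_ne_zero one_ne_zero)
  refine ((tendsto_qEulerNumber_exp n).comp hlog).congr' ?_
  filter_upwards [eventually_nhdsWithin_of_eventually_nhds (eventually_gt_nhds one_pos)] with q hq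
  rw [Function.comp_apply, exp_log hq, qEulerNumber]
end
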